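/- Let ψ be a nontrivial additive character of F_q and let r ≥ 1 be an integer. Let Ω_r be the set of all r×r nonsingular symmetric matrices over F_q. Then b_r(ψ) := Σ_{B ∈ Ω_r} Σ_{h ∈ F_q^{r×2}} ψ(Tr(δ_ε · ᵗh · B · h)) equals q^{r(r+6)/4} · Π_{j=1}^{r/2} (q^{2j−1} − 1) if r is even, and equals −q^{(r²+4r−1)/4} · Π_{j=1}^{(r+1)/2} (q^{2j−1} − 1) if r is odd. -/

import Mathlib

/-!
Write `K = F(√ε)` and `q = #F`. For nonsingular symmetric `B`, the inner sum over `h` is the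
character sum `T` of the Hermitian form `H(z) = z̄ᵀ B z` on `Kʳ`. Scaling `z` by `c ∈ Kˣ`
multiplies `H` by the norm of `c`, which is onto `Fˣ`, so `H` takes all nonzero values equally
often and `T = N₀ - N₁` (`Nₜ` the number of `z` with `H z = t`) for every nontrivial character,
`ψ⁻¹` included. Splitting `z = x + √ε y` factors `T` into quadratic Gauss sums, and
`G(B) G(-B) = qʳ` by completing the square, so `T² = q²ʳ`. The free action of `Kˣ` on the nonzero
zeros of `H` gives `q² - 1 ∣ N₀ - 1`, which forces `T ≡ 1 (mod q + 1)`, i.e. `T = (-q)ʳ`.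

Hence `b_r(ψ) = (-q)ʳ · #Ω_r`, and `#Ω_r` follows by expanding along the first row and column:
a nonzero corner is removed by a Schur complement, while a zero corner with nonzero border can be
moved by `GL` to a hyperbolic plane, so
`#Ω_{n+2} = (q - 1) q^{n+1} #Ω_{n+1} + (q^{n+1} - 1) q^{n+1} #Ω_n`.
-/

open Matrix
open scoped BigOperators Classical

noncomputable section

abbrev Fq (s : ℕ) : Type := GaloisField 3 s
noncomputable instance (s : ℕ) : Fintype (Fq s) := Fintype.ofFinite _

def deltaEps (s : ℕ) (ε : Fq s) : Matrix (Fin 2) (Fin 2) (Fq s) := !![1, 0; 0, -ε]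

/-- `b_r(ψ)`: the sum over nonsingular symmetric `r × r` matrices `B` and all `r × 2`
matrices `h` of `ψ(Tr(δ_ε ᵗh B h))`. -/
def bSum (s : ℕ) (ε : Fq s) (r : ℕ) (ψ : AddChar (Fq s) ℂ) : ℂ :=
  ∑ B ∈ Finset.univ.filter (fun B : Matrix (Fin r) (Fin r) (Fq s) => IsUnit B.det ∧ B.IsSymm),
    ∑ h : Matrix (Fin r) (Fin 2) (Fq s), ψ (deltaEps s ε * (hᵀ * B * h)).trace

open Finset

theorem MulAction.card_dvd_card_of_free {G α : Type*} [Group G] [Fintype G] [MulAction G α]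
    (s : Finset α) (hs : ∀ g : G, ∀ a ∈ s, g • a ∈ s)
    (hfree : ∀ g : G, ∀ a ∈ s, g • a = a → g = 1) :
    Fintype.card G ∣ #s := by
  let mk := Quotient.mk (MulAction.orbitRel G α)
  rw [card_eq_sum_card_fiberwise (f := mk) (t := s.image mk) fun a ha => mem_image_of_mem mk ha]
  refine dvd_sum fun o ho => ?_
  obtain ⟨a, ha, rfl⟩ := mem_image.mp ho
  have horbit : s.filter (fun b => mk b = mk a) = univ.image fun g : G => g • a := by
    ext b
    simp only [mem_filter, mem_image, mem_univ, true_and]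
    constructor
    · rintro ⟨-, hb⟩
      exact Quotient.exact hb
    · rintro ⟨g, rfl⟩
      exact ⟨hs g a ha, Quotient.sound ⟨g, rfl⟩⟩
  have hinj : Function.Injective fun g : G => g • a := fun g g' (h : g • a = g' • a) => by
    have := hfree (g'⁻¹ * g) a ha (by rw [mul_smul, h, inv_smul_smul])
    rwa [inv_mul_eq_one, eq_comm] at this
  rw [horbit, card_image_of_injective _ hinj, card_univ]

/- The hypotheses give `Q + 1 ∣ T - 1`, while `(-Q)ⁿ ≡ 1 (mod Q + 1)`; since `Q + 1 ∤ 2`, this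
excludes `T = -(-Q)ⁿ`. -/
theorem Int.eq_neg_pow_of_sq_eq {Q T N : ℤ} {n : ℕ} (hQ : 2 ≤ Q) (hsq : T ^ 2 = (Q ^ 2) ^ n)
    (hN : Q * N - (Q - 1) * T = (Q ^ 2) ^ n) (hdvd : Q ^ 2 - 1 ∣ N - 1) : T = (-Q) ^ n := by
  have hT : Q + 1 ∣ T - 1 := by
    have hpow : Q ^ 2 - 1 ∣ (Q ^ 2) ^ n - 1 := by simpa using sub_dvd_pow_sub_pow (Q ^ 2) 1 n
    have : (Q - 1) * (Q + 1) ∣ (Q - 1) * (T - 1) := by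
      rw [show (Q - 1) * (T - 1) = Q * (N - 1) - ((Q ^ 2) ^ n - 1) by linear_combination -hN,
        show (Q - 1) * (Q + 1) = Q ^ 2 - 1 by ring]
      exact dvd_sub (hdvd.mul_left Q) hpow
    exact (mul_dvd_mul_iff_left (by omega)).mp this
  have hpow : Q + 1 ∣ (-Q) ^ n - 1 := by
    have := sub_dvd_pow_sub_pow (-Q) 1 n
    rwa [one_pow, show -Q - 1 = -(Q + 1) by ring, neg_dvd] at this
  have hsq' : T ^ 2 = ((-Q) ^ n) ^ 2 := by
    rw [hsq, ← neg_sq Q, ← pow_mul, ← pow_mul, mul_comm]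
  rcases sq_eq_sq_iff_eq_or_eq_neg.mp hsq' with h | h
  · exact h
  · have h2 : Q + 1 ∣ 2 := by
      have := dvd_add hT hpow
      rwa [h, show -(-Q) ^ n - 1 + ((-Q) ^ n - 1) = -2 by ring, dvd_neg] at this
    have := Int.le_of_dvd (by norm_num) h2
    omega

theorem Matrix.IsSymm.dotProduct_mulVec_comm {R ι : Type*} [CommSemiring R] [Fintype ι]
    {B : Matrix ι ι R} (hB : B.IsSymm) (x y : ι → R) : x ⬝ᵥ B *ᵥ y = y ⬝ᵥ B *ᵥ x := by
  rw [← dotProduct_transpose_mulVec, hB.eq]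

section CharacterSums

variable {F : Type*} [Field F] [Fintype F]

section ConstantFibers

variable {α : Type*} [Fintype α]

theorem sum_addChar_eq_card_sub_card {ψ : AddChar F ℂ} (hψ : ψ ≠ 1) (f : α → F)
    (hf : ∀ t ≠ 0, #{a | f a = t} = #{a | f a = 1}) :
    ∑ a, ψ (f a) = #{a | f a = 0} - #{a | f a = 1} := by
  have hcard : ∀ t, (#{a | f a = t} : ℂ) =
      #{a | f a = 1} + if t = 0 then (#{a | f a = 0} - #{a | f a = 1} : ℂ) else 0 := by
    intro t
    split_ifs with ht
    · rw [ht]; ring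
    · rw [hf t ht, add_zero]
  calc ∑ a, ψ (f a) = ∑ t, (#{a | f a = t} : ℂ) * ψ t := by
        rw [← sum_fiberwise' univ f]
        simp
    _ = #{a | f a = 1} * ∑ t, ψ t + (#{a | f a = 0} - #{a | f a = 1}) := by
        rw [sum_congr rfl fun t _ => by rw [hcard t]]
        simp only [add_mul, sum_add_distrib, ite_mul, zero_mul, sum_ite_eq', mem_univ, if_true,
          AddChar.map_zero_eq_one, mul_one, mul_sum]
    _ = _ := by rw [AddChar.sum_eq_zero_of_ne_one hψ]; ring

theorem card_fiber_zero_add_mul_card_fiber_one (f : α → F)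
    (hf : ∀ t ≠ 0, #{a | f a = t} = #{a | f a = 1}) :
    #{a | f a = 0} + (Fintype.card F - 1) * #{a | f a = 1} = Fintype.card α := by
  calc #{a | f a = 0} + (Fintype.card F - 1) * #{a | f a = 1} = ∑ t, #{a | f a = t} := by
        rw [← add_sum_erase _ _ (mem_univ 0),
          sum_congr rfl fun t ht => hf t (ne_of_mem_erase ht), sum_const,
          card_erase_of_mem (mem_univ 0), card_univ, smul_eq_mul]
    _ = Fintype.card α := (card_eq_sum_card_fiberwise fun a _ => mem_univ (f a)).symm

end ConstantFibers

variable {ι : Type*} [Fintype ι] [DecidableEq ι]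

theorem AddChar.sum_dotProduct_eq_ite {ψ : AddChar F ℂ} (hψ : ψ ≠ 1) (w : ι → F) :
    ∑ u : ι → F, ψ (u ⬝ᵥ w) = if w = 0 then (Fintype.card F : ℂ) ^ Fintype.card ι else 0 := by
  split_ifs with hw
  · simp [hw, card_univ]
  obtain ⟨i, hi⟩ := Function.ne_iff.mp hw
  obtain ⟨t, ht⟩ := AddChar.ne_one_iff.mp hψ
  let φ := ψ.compAddMonoidHom (AddMonoidHom.mk' (· ⬝ᵥ w) fun u v => add_dotProduct u v w)
  have hφ : φ ≠ 1 := AddChar.ne_one_iff.mpr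
    ⟨Pi.single i (t / w i), by simpa [φ, div_mul_cancel₀ t hi] using ht⟩
  exact AddChar.sum_eq_zero_of_ne_one hφ

def quadGaussSum (ψ : AddChar F ℂ) (B : Matrix ι ι F) : ℂ := ∑ x, ψ (x ⬝ᵥ B *ᵥ x)

theorem quadGaussSum_inv (ψ : AddChar F ℂ) (B : Matrix ι ι F) :
    quadGaussSum ψ⁻¹ B = quadGaussSum ψ (-B) := by
  simp [quadGaussSum, neg_mulVec]

theorem quadGaussSum_mul_neg {ψ : AddChar F ℂ} (hψ : ψ ≠ 1) (h2 : (2 : F) ≠ 0)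
    {B : Matrix ι ι F} (hB : B.IsSymm) (hdet : IsUnit B.det) :
    quadGaussSum ψ B * quadGaussSum ψ (-B) = (Fintype.card F : ℂ) ^ Fintype.card ι := by
  have hpolar : ∀ y z : ι → F,
      (y + z) ⬝ᵥ B *ᵥ (y + z) + y ⬝ᵥ (-B) *ᵥ y = z ⬝ᵥ B *ᵥ z + y ⬝ᵥ ((2 : F) • B) *ᵥ z := by
    intro y z
    simp only [mulVec_add, add_dotProduct, dotProduct_add, neg_mulVec, dotProduct_neg,
      smul_mulVec, dotProduct_smul, hB.dotProduct_mulVec_comm z y]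
    module
  have hker : ∀ z : ι → F, ((2 : F) • B) *ᵥ z = 0 ↔ z = 0 := fun z => by
    rw [smul_mulVec, smul_eq_zero_iff_right h2,
      (mulVec_injective_iff_isUnit.mpr (B.isUnit_iff_isUnit_det.mpr hdet)).eq_iff' (mulVec_zero B)]
  calc quadGaussSum ψ B * quadGaussSum ψ (-B)
      = ∑ y, ∑ z, ψ ((y + z) ⬝ᵥ B *ᵥ (y + z) + y ⬝ᵥ (-B) *ᵥ y) := by
        rw [quadGaussSum, quadGaussSum, sum_mul_sum, sum_comm]
        refine sum_congr rfl fun y _ => ?_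
        rw [← Equiv.sum_comp (Equiv.addLeft y)]
        simp only [Equiv.coe_addLeft, AddChar.map_add_eq_mul]
    _ = ∑ z, ψ (z ⬝ᵥ B *ᵥ z) * ∑ y, ψ (y ⬝ᵥ ((2 : F) • B) *ᵥ z) := by
        rw [sum_comm]
        simp only [hpolar, AddChar.map_add_eq_mul, mul_sum]
    _ = (Fintype.card F : ℂ) ^ Fintype.card ι := by
        simp [AddChar.sum_dotProduct_eq_ite hψ, hker]

end CharacterSums

namespace QuadraticAlgebra

variable {F : Type*}

instance instFintype [Fintype F] (a b : F) : Fintype (QuadraticAlgebra F a b) :=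
  Fintype.ofEquiv (F × F) (equivProd a b).symm

theorem card_eq_sq [Fintype F] (a b : F) :
    Fintype.card (QuadraticAlgebra F a b) = Fintype.card F ^ 2 := by
  rw [Fintype.card_congr (equivProd a b), Fintype.card_prod, sq]

variable [Field F]

theorem fact_of_not_isSquare {ε : F} (hε : ¬ IsSquare ε) : Fact (∀ r : F, r ^ 2 ≠ ε + 0 * r) :=
  ⟨fun r hr => hε ⟨r, by rw [← sq, hr, zero_mul, add_zero]⟩⟩

theorem norm_surjective [Fintype F] (ε : F) [Fact (∀ r : F, r ^ 2 ≠ ε + 0 * r)] :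
    Function.Surjective (norm : QuadraticAlgebra F ε 0 → F) := fun t => by
  obtain ⟨z, hz⟩ := FiniteField.norm_surjective F (QuadraticAlgebra F ε 0) t
  refine ⟨z, ?_⟩
  rw [← hz, Algebra.norm_apply, ← det_toLinearMap_eq_norm]
  rfl

end QuadraticAlgebra

section HermitianForm

variable {F : Type*} [Field F] {ι : Type*} [Fintype ι]

/-- The form `z ↦ z̄ᵀ B z` on `F(√ε)ʳ` in the coordinates `z = x + √ε y`; for symmetric `B` it is
Hermitian and takes values in `F`. -/
def hermitianForm (ε : F) (B : Matrix ι ι F) (z : ι → QuadraticAlgebra F ε 0) : F :=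
  (fun i => (z i).re) ⬝ᵥ B *ᵥ (fun i => (z i).re) -
    ε * ((fun i => (z i).im) ⬝ᵥ B *ᵥ (fun i => (z i).im))

theorem hermitianForm_smul {ε : F} {B : Matrix ι ι F} (hB : B.IsSymm)
    (c : QuadraticAlgebra F ε 0) (z : ι → QuadraticAlgebra F ε 0) :
    hermitianForm ε B (c • z) = c.norm * hermitianForm ε B z := by
  have hre : (fun i => ((c • z) i).re) =
      c.re • (fun i => (z i).re) + (ε * c.im) • fun i => (z i).im := by
    ext i; simp
  have him : (fun i => ((c • z) i).im) =
      c.re • (fun i => (z i).im) + c.im • fun i => (z i).re := by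
    ext i; simp
  simp only [hermitianForm, hre, him, mulVec_add, mulVec_smul, dotProduct_add, add_dotProduct,
    dotProduct_smul, smul_dotProduct, smul_eq_mul,
    hB.dotProduct_mulVec_comm (fun i => (z i).im), QuadraticAlgebra.norm_def]
  ring

theorem transpose_mul_mul_self_apply {κ : Type*} (B : Matrix ι ι F) (h : Matrix ι κ F) (k : κ) :
    (hᵀ * B * h) k k = (fun i => h i k) ⬝ᵥ B *ᵥ fun i => h i k := by
  rw [Matrix.mul_assoc, mul_apply]
  simp [dotProduct, mulVec, mul_apply]

theorem trace_diag_one_neg_mul (ε : F) (M : Matrix (Fin 2) (Fin 2) F) :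
    (!![1, 0; 0, -ε] * M).trace = M 0 0 - ε * M 1 1 := by
  simp [trace_fin_two, vecMul, dotProduct, Fin.sum_univ_two]
  ring

variable [Fintype F] [DecidableEq ι]

theorem sum_trace_eq_sum_hermitianForm (ψ : AddChar F ℂ) (ε : F) (B : Matrix ι ι F) :
    ∑ h : Matrix ι (Fin 2) F, ψ ((!![1, 0; 0, -ε] * (hᵀ * B * h)).trace) =
      ∑ z, ψ (hermitianForm ε B z) := by
  let e : (ι → QuadraticAlgebra F ε 0) ≃ Matrix ι (Fin 2) F :=
    (Equiv.piCongrRight fun _ => (QuadraticAlgebra.linearEquivTuple ε 0).toEquiv).trans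
      Matrix.of
  refine (Fintype.sum_equiv e _ _ fun z => ?_).symm
  rw [trace_diag_one_neg_mul, transpose_mul_mul_self_apply, transpose_mul_mul_self_apply]
  rfl

theorem sum_addChar_hermitianForm_eq_mul (ψ : AddChar F ℂ) (ε : F) (B : Matrix ι ι F) :
    ∑ z, ψ (hermitianForm ε B z) = quadGaussSum ψ B * quadGaussSum ψ (-(ε • B)) := by
  let e : (ι → QuadraticAlgebra F ε 0) ≃ (ι → F) × (ι → F) :=
    (Equiv.piCongrRight fun _ => QuadraticAlgebra.equivProd ε 0).trans
      (Equiv.arrowProdEquivProdArrow _ _ _)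
  rw [quadGaussSum, quadGaussSum, sum_mul_sum, ← sum_product', ← Fintype.sum_equiv e.symm]
  · rfl
  intro p
  simp [hermitianForm, e, sub_eq_add_neg, AddChar.map_add_eq_mul, neg_mulVec, smul_mulVec]

theorem sum_addChar_hermitianForm_mul_inv {ψ : AddChar F ℂ} (hψ : ψ ≠ 1)
    (h2 : (2 : F) ≠ 0) {ε : F} (hε : ε ≠ 0) {B : Matrix ι ι F} (hB : B.IsSymm)
    (hdet : IsUnit B.det) :
    (∑ z, ψ (hermitianForm ε B z)) * ∑ z, ψ⁻¹ (hermitianForm ε B z) =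
      ((Fintype.card F : ℂ) ^ 2) ^ Fintype.card ι := by
  have hεB : IsUnit (ε • B).det := by
    rw [det_smul]
    exact (Ne.isUnit (pow_ne_zero _ hε)).mul hdet
  calc (∑ z, ψ (hermitianForm ε B z)) * ∑ z, ψ⁻¹ (hermitianForm ε B z)
      = (quadGaussSum ψ B * quadGaussSum ψ (-B)) *
          (quadGaussSum ψ (ε • B) * quadGaussSum ψ (-(ε • B))) := by
        rw [sum_addChar_hermitianForm_eq_mul, sum_addChar_hermitianForm_eq_mul, quadGaussSum_inv,
          quadGaussSum_inv, neg_neg]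
        ring
    _ = ((Fintype.card F : ℂ) ^ 2) ^ Fintype.card ι := by
        rw [quadGaussSum_mul_neg hψ h2 hB hdet, quadGaussSum_mul_neg hψ h2 (hB.smul ε) hεB,
          ← mul_pow, sq]

variable {ε : F} [Fact (∀ r : F, r ^ 2 ≠ ε + 0 * r)] {B : Matrix ι ι F}

theorem card_hermitianForm_eq_card_one (hB : B.IsSymm) {t : F} (ht : t ≠ 0) :
    #{z | hermitianForm ε B z = t} = #{z | hermitianForm ε B z = 1} := by
  obtain ⟨c, hc⟩ := QuadraticAlgebra.norm_surjective ε t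
  have hc0 : c ≠ 0 := by rintro rfl; simp [eq_comm, ht] at hc
  symm
  refine card_nbij' (c • ·) (c⁻¹ • ·) (fun z hz => ?_) (fun z hz => ?_) (fun z _ => ?_)
    (fun z _ => ?_)
  · simp only [coe_filter, mem_univ, true_and, Set.mem_ofPred_eq] at hz ⊢
    rw [hermitianForm_smul hB, hz, hc, mul_one]
  · simp only [coe_filter, mem_univ, true_and, Set.mem_ofPred_eq] at hz ⊢
    rw [hermitianForm_smul hB, hz, ← hc, ← map_mul, inv_mul_cancel₀ hc0, map_one]
  · simp [smul_smul, inv_mul_cancel₀ hc0]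
  · simp [smul_smul, mul_inv_cancel₀ hc0]

theorem card_hermitianForm_zero_add_mul (hB : B.IsSymm) :
    (#{z | hermitianForm ε B z = 0} : ℤ) + (Fintype.card F - 1) * #{z | hermitianForm ε B z = 1} =
      ((Fintype.card F : ℤ) ^ 2) ^ Fintype.card ι := by
  have := card_fiber_zero_add_mul_card_fiber_one (hermitianForm ε B) fun t ht =>
    card_hermitianForm_eq_card_one hB ht
  rw [Fintype.card_fun, QuadraticAlgebra.card_eq_sq] at this
  have hq : 1 ≤ Fintype.card F := Fintype.card_pos
  have := congrArg (Nat.cast (R := ℤ)) this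
  push_cast [Nat.cast_sub hq] at this
  exact this

theorem sq_card_sub_one_dvd_card_hermitianForm_zero_sub_one (hB : B.IsSymm) :
    (Fintype.card F : ℤ) ^ 2 - 1 ∣ (#{z | hermitianForm ε B z = 0} : ℤ) - 1 := by
  have hZ : (univ.filter fun z : ι → QuadraticAlgebra F ε 0 => hermitianForm ε B z = 0) =
      insert 0 (univ.filter fun z => z ≠ 0 ∧ hermitianForm ε B z = 0) := by
    ext z
    simp only [mem_filter, mem_univ, true_and, mem_insert]
    by_cases hz : z = 0 <;> simp [hz, hermitianForm]
  have hdvd :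
      Fintype.card (QuadraticAlgebra F ε 0)ˣ ∣ #{z | z ≠ 0 ∧ hermitianForm ε B z = 0} := by
    refine MulAction.card_dvd_card_of_free _ (fun u z hz => ?_) (fun u z hz huz => ?_)
    · simp only [mem_filter, mem_univ, true_and] at hz ⊢
      rw [Units.smul_def, hermitianForm_smul hB, hz.2, mul_zero]
      exact ⟨(smul_ne_zero_iff_ne u).mpr hz.1, rfl⟩
    · simp only [mem_filter, mem_univ, true_and] at hz
      obtain ⟨i, hi⟩ := Function.ne_iff.mp hz.1
      have := congrFun huz i
      rw [Pi.smul_apply, Units.smul_def, smul_eq_mul] at this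
      exact Units.val_eq_one.mp (mul_right_cancel₀ hi (this.trans (one_mul _).symm))
  rw [Fintype.card_units, QuadraticAlgebra.card_eq_sq] at hdvd
  rw [hZ, card_insert_of_notMem (by simp)]
  have hq : 1 ≤ Fintype.card F ^ 2 := Nat.one_le_pow _ _ Fintype.card_pos
  simpa [Nat.cast_sub hq] using Int.natCast_dvd_natCast.mpr hdvd

end HermitianForm

theorem sum_addChar_hermitianForm {F : Type*} [Field F] [Fintype F] {ι : Type*} [Fintype ι]
    [DecidableEq ι] {ψ : AddChar F ℂ} (hψ : ψ ≠ 1) (h2 : (2 : F) ≠ 0) {ε : F}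
    (hε : ¬ IsSquare ε) {B : Matrix ι ι F} (hB : B.IsSymm) (hdet : IsUnit B.det) :
    ∑ z, ψ (hermitianForm ε B z) = (-(Fintype.card F : ℂ)) ^ Fintype.card ι := by
  have := QuadraticAlgebra.fact_of_not_isSquare hε
  have hε0 : ε ≠ 0 := by rintro rfl; exact hε ⟨0, by simp⟩
  have hsum : ∀ χ : AddChar F ℂ, χ ≠ 1 → ∑ z, χ (hermitianForm ε B z) =
      #{z | hermitianForm ε B z = 0} - #{z | hermitianForm ε B z = 1} := fun χ hχ =>
    sum_addChar_eq_card_sub_card hχ (hermitianForm ε B) fun t ht =>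
      card_hermitianForm_eq_card_one hB ht
  have hsq := sum_addChar_hermitianForm_mul_inv hψ h2 hε0 hB hdet
  rw [hsum ψ hψ, hsum ψ⁻¹ (inv_ne_one.mpr hψ), ← sq] at hsq
  have hT : (#{z | hermitianForm ε B z = 0} : ℤ) - #{z | hermitianForm ε B z = 1} =
      (-(Fintype.card F : ℤ)) ^ Fintype.card ι :=
    Int.eq_neg_pow_of_sq_eq (by exact_mod_cast Fintype.one_lt_card) (by exact_mod_cast hsq)
      (by linear_combination card_hermitianForm_zero_add_mul (ε := ε) hB)
      (sq_card_sub_one_dvd_card_hermitianForm_zero_sub_one hB)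
  rw [hsum ψ hψ]
  exact_mod_cast hT

theorem exists_isUnit_det_mulVec_eq {F μ : Type*} [Field F] [Fintype μ] [DecidableEq μ]
    {v w : μ → F} (hv : v ≠ 0) (hw : w ≠ 0) :
    ∃ P : Matrix μ μ F, IsUnit P.det ∧ P *ᵥ v = w := by
  obtain ⟨g, hg⟩ := Submodule.exists_linearEquiv_restrict_eq
    (LinearEquiv.coord F _ v hv ≪≫ₗ LinearEquiv.toSpanNonzeroSingleton F _ w hw)
  refine ⟨LinearMap.toMatrix' g.toLinearMap, ?_, ?_⟩
  · rw [LinearMap.det_toMatrix']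
    exact g.isUnit_det'
  · have := hg ⟨v, Submodule.mem_span_singleton_self v⟩
    rw [LinearEquiv.trans_apply, LinearEquiv.coord_self,
      LinearEquiv.toSpanNonzeroSingleton_one] at this
    rw [LinearMap.toMatrix'_mulVec]
    exact this.symm

section Border

variable {R μ : Type*}

def border (a : R) (v : μ → R) (C : Matrix μ μ R) : Matrix (Unit ⊕ μ) (Unit ⊕ μ) R :=
  fromBlocks (of fun _ _ => a) (replicateRow Unit v) (replicateCol Unit v) C

theorem isSymm_border_iff {a : R} {v : μ → R} {C : Matrix μ μ R} :
    (border a v C).IsSymm ↔ C.IsSymm := by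
  simp [border, IsSymm, ← Matrix.ext_iff]

theorem eq_border_of_isSymm {B : Matrix (Unit ⊕ μ) (Unit ⊕ μ) R} (hB : B.IsSymm) :
    B = border (B (.inl ()) (.inl ())) (fun j => B (.inr j) (.inl ())) B.toBlocks₂₂ := by
  ext (_ | i) (_ | j)
  · rfl
  · exact (hB.apply _ _).symm
  · rfl
  · rfl

theorem card_isSymm_and_eq_sum [Fintype R] [DecidableEq R] [Fintype μ] [DecidableEq μ]
    (p : Matrix (Unit ⊕ μ) (Unit ⊕ μ) R → Prop) [DecidablePred p] :
    #{B | B.IsSymm ∧ p B} = ∑ a, ∑ v, #{C : Matrix μ μ R | C.IsSymm ∧ p (border a v C)} := by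
  rw [card_eq_sum_card_fiberwise (t := univ)
    (f := fun B => (B (.inl ()) (.inl ()), fun j => B (.inr j) (.inl ()))) fun _ _ => mem_univ _,
    Fintype.sum_prod_type]
  refine sum_congr rfl fun a _ => sum_congr rfl fun v _ => ?_
  refine card_nbij' toBlocks₂₂ (border a v) ?_ ?_ ?_ ?_
  · rintro B hB
    simp only [mem_coe, mem_filter, mem_univ, true_and, Prod.mk.injEq] at hB ⊢
    obtain ⟨⟨hsymm, hp⟩, rfl, rfl⟩ := hB
    rw [← eq_border_of_isSymm hsymm]
    exact ⟨isSymm_border_iff.mp (eq_border_of_isSymm hsymm ▸ hsymm), hp⟩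
  · rintro C hC
    simp only [mem_coe, mem_filter, mem_univ, true_and] at hC ⊢
    exact ⟨⟨isSymm_border_iff.mpr hC.1, hC.2⟩, rfl⟩
  · rintro B hB
    simp only [mem_coe, mem_filter, mem_univ, true_and, Prod.mk.injEq] at hB
    obtain ⟨⟨hsymm, -⟩, rfl, rfl⟩ := hB
    exact (eq_border_of_isSymm hsymm).symm
  · intro C _
    rfl

end Border

section BorderDet

variable {F : Type*} [Field F] {κ μ : Type*} [Fintype κ] [DecidableEq κ]

theorem det_border_of_ne_zero [Fintype μ] [DecidableEq μ] {a : F} (ha : a ≠ 0) (v : μ → F)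
    (C : Matrix μ μ F) :
    (border a v C).det = a * (C - a⁻¹ • vecMulVec v v).det := by
  let _ : Invertible (of fun _ _ => a : Matrix Unit Unit F) :=
    ⟨of fun _ _ => a⁻¹, by ext; simp [mul_apply, ha], by ext; simp [mul_apply, ha]⟩
  rw [border, det_fromBlocks₁₁, det_unique]
  congr 2
  ext i j
  simp [mul_apply, vecMulVec_apply, replicateCol_apply, replicateRow_apply]
  ring

theorem border_mulVec [Fintype μ] (P : Matrix μ μ F) (a : F) (v : μ → F) (C : Matrix μ μ F) :
    border a (P *ᵥ v) (P * C * Pᵀ) =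
      fromBlocks 1 0 0 P * border a v C * (fromBlocks 1 0 0 P)ᵀ := by
  simp [border, fromBlocks_transpose, fromBlocks_multiply, replicateCol_mulVec,
    replicateRow_mulVec, transpose_mul, transpose_replicateCol, Matrix.mul_assoc]

/- Swapping the first two columns makes the matrix block lower triangular with diagonal blocks
`1`, `1`, `D`. -/
theorem det_border_zero_single (c : F) (d : κ → F) (D : Matrix κ κ F) :
    (border 0 (Pi.single (.inl ()) 1) (border c d D)).det = -D.det := by
  set M := border 0 (Pi.single (.inl ()) 1) (border c d D)
  have hswap : M.submatrix id (Equiv.swap (.inl ()) (.inr (.inl ()))) =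
      fromBlocks 1 0 (of fun i _ => M (.inr i) (.inr (.inl ())))
        (fromBlocks 1 (replicateRow Unit d) 0 D) := by
    ext (_ | _ | k) (_ | _ | l) <;> simp [M, border, Equiv.swap_apply_of_ne_of_ne]
  have := det_permute' (Equiv.swap (.inl ()) (.inr (.inl ()))) M
  rw [hswap, det_fromBlocks_zero₁₂, det_fromBlocks_zero₂₁, Equiv.Perm.sign_swap (by simp),
    det_one, one_mul, one_mul] at this
  rw [this]
  simp

end BorderDet

section Counting

variable {F : Type*} [Field F] [Fintype F] [DecidableEq F]
variable {ι κ μ : Type*} [Fintype ι] [DecidableEq ι] [Fintype κ] [DecidableEq κ]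
  [Fintype μ] [DecidableEq μ]

variable (F) in
def nonsingularSymm (ι : Type*) [Fintype ι] [DecidableEq ι] : Finset (Matrix ι ι F) :=
  {B | IsUnit B.det ∧ B.IsSymm}

theorem mem_nonsingularSymm {B : Matrix ι ι F} :
    B ∈ nonsingularSymm F ι ↔ IsUnit B.det ∧ B.IsSymm := by
  simp [nonsingularSymm]

theorem card_isSymm_and_isUnit_det :
    #{B : Matrix ι ι F | B.IsSymm ∧ IsUnit B.det} = #(nonsingularSymm F ι) := by
  congr 1
  ext B
  simp [mem_nonsingularSymm, and_comm]

theorem card_nonsingularSymm_congr (e : ι ≃ κ) :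
    #(nonsingularSymm F ι) = #(nonsingularSymm F κ) :=
  card_equiv (reindex e e) fun B => by
    simp only [mem_nonsingularSymm, det_reindex_self, isSymm_reindex_iff]

theorem card_nonsingularSymm_of_isEmpty [IsEmpty ι] : #(nonsingularSymm F ι) = 1 := by
  rw [card_eq_one]
  refine ⟨1, eq_singleton_iff_unique_mem.mpr ⟨?_, fun B _ => Subsingleton.elim B 1⟩⟩
  simp [mem_nonsingularSymm, isSymm_one]

theorem card_nonsingularSymm_of_unique [Unique ι] :
    #(nonsingularSymm F ι) = Fintype.card F - 1 := by
  rw [← card_univ, ← card_erase_of_mem (mem_univ (0 : F))]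
  refine card_nbij' (fun B => B default default) (fun a => of fun _ _ => a) ?_ ?_ ?_ ?_
  · intro B hB
    simp only [mem_coe, mem_nonsingularSymm, det_unique] at hB
    simpa using hB.1.ne_zero
  · intro a ha
    simp only [mem_coe, mem_erase] at ha
    simp only [mem_coe, mem_nonsingularSymm, det_unique]
    refine ⟨isUnit_iff_ne_zero.mpr ha.1, ?_⟩
    ext i j
    simp [Subsingleton.elim i j]
  · intro B _
    ext i j
    simp [Subsingleton.elim i default, Subsingleton.elim j default]
  · intro a _
    rfl

variable (μ) in
def borderCount (a : F) (v : μ → F) : ℕ :=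
  #{C : Matrix μ μ F | C.IsSymm ∧ IsUnit (border a v C).det}

theorem card_nonsingularSymm_sum_eq_sum :
    #(nonsingularSymm F (Unit ⊕ μ)) = ∑ a : F, ∑ v : μ → F, borderCount μ a v := by
  unfold borderCount
  rw [← card_isSymm_and_isUnit_det, card_isSymm_and_eq_sum fun B => IsUnit B.det]

theorem borderCount_of_ne_zero {a : F} (ha : a ≠ 0) (v : μ → F) :
    borderCount μ a v = #(nonsingularSymm F μ) := by
  have hvv : (a⁻¹ • vecMulVec v v).IsSymm :=
    (show (vecMulVec v v).IsSymm from transpose_vecMulVec v v).smul a⁻¹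
  refine card_nbij' (· - a⁻¹ • vecMulVec v v) (· + a⁻¹ • vecMulVec v v) ?_ ?_ ?_ ?_
  · intro C hC
    simp only [mem_coe, mem_filter, mem_univ, true_and, mem_nonsingularSymm,
      det_border_of_ne_zero ha] at hC ⊢
    exact ⟨(IsUnit.mul_iff.mp hC.2).2, hC.1.sub hvv⟩
  · intro C hC
    simp only [mem_coe, mem_filter, mem_univ, true_and, mem_nonsingularSymm,
      det_border_of_ne_zero ha, add_sub_cancel_right] at hC ⊢
    exact ⟨hC.2.add hvv, (Ne.isUnit ha).mul hC.1⟩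
  · intro C _; simp
  · intro C _; simp

theorem borderCount_zero_zero : borderCount μ (0 : F) 0 = 0 := by
  refine card_eq_zero.mpr (filter_eq_empty_iff.mpr fun C _ => ?_)
  rw [det_eq_zero_of_row_eq_zero (Sum.inl ()) fun j => by cases j <;> rfl]
  simp

theorem borderCount_mulVec {P : Matrix μ μ F} (hP : IsUnit P.det) (a : F) (v : μ → F) :
    borderCount μ a (P *ᵥ v) = borderCount μ a v := by
  have hmaps : ∀ Q : Matrix μ μ F, IsUnit Q.det → ∀ w C, C.IsSymm ∧ IsUnit (border a w C).det →
      (Q * C * Qᵀ).IsSymm ∧ IsUnit (border a (Q *ᵥ w) (Q * C * Qᵀ)).det := by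
    rintro Q hQ w C ⟨hC, hdet⟩
    refine ⟨by simp [IsSymm, transpose_mul, hC.eq, Matrix.mul_assoc], ?_⟩
    rw [border_mulVec, det_mul, det_mul, det_transpose, det_fromBlocks_zero₂₁, det_one, one_mul]
    exact (hQ.mul hdet).mul hQ
  have hPinv : IsUnit P⁻¹.det := isUnit_nonsing_inv_det P hP
  symm
  refine card_nbij' (fun C => P * C * Pᵀ) (fun C => P⁻¹ * C * P⁻¹ᵀ) ?_ ?_ ?_ ?_
  · intro C hC
    simp only [mem_coe, mem_filter, mem_univ, true_and] at hC ⊢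
    exact hmaps P hP v C hC
  · intro C hC
    simp only [mem_coe, mem_filter, mem_univ, true_and] at hC ⊢
    simpa [mulVec_mulVec, nonsing_inv_mul _ hP] using hmaps P⁻¹ hPinv _ C hC
  · intro C _
    simp [nonsing_inv_mul _ hP, Matrix.mul_assoc, ← transpose_mul,
      nonsing_inv_mul_cancel_left _ _ hP]
  · intro C _
    simp [mul_nonsing_inv _ hP, Matrix.mul_assoc, ← transpose_mul,
      mul_nonsing_inv_cancel_left _ _ hP]

theorem borderCount_zero_eq_of_ne_zero {v w : μ → F} (hv : v ≠ 0) (hw : w ≠ 0) :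
    borderCount μ 0 v = borderCount μ 0 w := by
  obtain ⟨P, hP, rfl⟩ := exists_isUnit_det_mulVec_eq hv hw
  exact (borderCount_mulVec hP 0 v).symm

theorem borderCount_zero_single :
    borderCount (Unit ⊕ κ) (0 : F) (Pi.single (.inl ()) 1) =
      Fintype.card F * (Fintype.card F ^ Fintype.card κ * #(nonsingularSymm F κ)) := by
  unfold borderCount
  rw [card_isSymm_and_eq_sum fun C => IsUnit (border 0 (Pi.single (.inl ()) 1) C).det]
  simp only [det_border_zero_single, IsUnit.neg_iff, card_isSymm_and_isUnit_det, sum_const,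
    card_univ, Fintype.card_fun, smul_eq_mul]

theorem card_nonsingularSymm_unit_sum_unit_sum :
    #(nonsingularSymm F (Unit ⊕ (Unit ⊕ κ))) =
      (Fintype.card F - 1) *
          (Fintype.card F ^ (Fintype.card κ + 1) * #(nonsingularSymm F (Unit ⊕ κ))) +
      (Fintype.card F ^ (Fintype.card κ + 1) - 1) *
        (Fintype.card F * (Fintype.card F ^ Fintype.card κ * #(nonsingularSymm F κ))) := by
  have hcard : Fintype.card (Unit ⊕ κ → F) = Fintype.card F ^ (Fintype.card κ + 1) := by
    simp [add_comm]
  have hsingle : (Pi.single (.inl ()) 1 : Unit ⊕ κ → F) ≠ 0 := by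
    simp
  rw [card_nonsingularSymm_sum_eq_sum, ← add_sum_erase _ _ (mem_univ 0),
    ← add_sum_erase _ _ (mem_univ 0), borderCount_zero_zero, zero_add,
    sum_congr rfl fun v hv => borderCount_zero_eq_of_ne_zero (ne_of_mem_erase hv) hsingle,
    sum_congr rfl fun a ha => sum_congr rfl fun v _ =>
      borderCount_of_ne_zero (ne_of_mem_erase ha) v,
    borderCount_zero_single]
  simp [card_erase_of_mem, card_univ, hcard, add_comm]

theorem card_nonsingularSymm_fin_add_two (n : ℕ) :
    #(nonsingularSymm F (Fin (n + 2))) =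
      (Fintype.card F - 1) * (Fintype.card F ^ (n + 1) * #(nonsingularSymm F (Fin (n + 1)))) +
      (Fintype.card F ^ (n + 1) - 1) *
        (Fintype.card F * (Fintype.card F ^ n * #(nonsingularSymm F (Fin n)))) := by
  let e : ∀ k, Fin (k + 1) ≃ Unit ⊕ Fin k := fun k =>
    (finSuccEquiv k).trans ((Equiv.optionEquivSumPUnit _).trans (Equiv.sumComm _ _))
  rw [card_nonsingularSymm_congr ((e (n + 1)).trans (Equiv.sumCongr (Equiv.refl _) (e n))),
    card_nonsingularSymm_unit_sum_unit_sum, card_nonsingularSymm_congr (e n).symm, Fintype.card_fin]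

theorem card_nonsingularSymm_fin (R : Type*) [CommRing R] (m : ℕ) :
    (#(nonsingularSymm F (Fin (2 * m))) : R) = (Fintype.card F : R) ^ (m * (m + 1)) *
        ∏ j ∈ Finset.Icc 1 m, ((Fintype.card F : R) ^ (2 * j - 1) - 1) ∧
    (#(nonsingularSymm F (Fin (2 * m + 1))) : R) = (Fintype.card F : R) ^ (m * (m + 1)) *
        ∏ j ∈ Finset.Icc 1 (m + 1), ((Fintype.card F : R) ^ (2 * j - 1) - 1) := by
  have hq : 1 ≤ Fintype.card F := Fintype.card_pos
  have hrec : ∀ n, (#(nonsingularSymm F (Fin (n + 2))) : R) =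
      ((Fintype.card F : R) - 1) *
          ((Fintype.card F : R) ^ (n + 1) * #(nonsingularSymm F (Fin (n + 1)))) +
      ((Fintype.card F : R) ^ (n + 1) - 1) *
        ((Fintype.card F : R) * ((Fintype.card F : R) ^ n * #(nonsingularSymm F (Fin n)))) := by
    intro n
    rw [card_nonsingularSymm_fin_add_two]
    push_cast [Nat.cast_sub hq, Nat.cast_sub (Nat.one_le_pow _ _ hq)]
    ring
  have hprod : ∀ k, ∏ j ∈ Finset.Icc 1 (k + 1), ((Fintype.card F : R) ^ (2 * j - 1) - 1) =
      (∏ j ∈ Finset.Icc 1 k, ((Fintype.card F : R) ^ (2 * j - 1) - 1)) *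
        ((Fintype.card F : R) ^ (2 * k + 1) - 1) := fun k => by
    rw [prod_Icc_succ_top (by omega), show 2 * (k + 1) - 1 = 2 * k + 1 by omega]
  induction m with
  | zero =>
    simp [card_nonsingularSymm_of_isEmpty, card_nonsingularSymm_of_unique, Nat.cast_sub hq]
  | succ m ih =>
    have heven : (#(nonsingularSymm F (Fin (2 * (m + 1)))) : R) =
        (Fintype.card F : R) ^ ((m + 1) * (m + 2)) *
          ∏ j ∈ Finset.Icc 1 (m + 1), ((Fintype.card F : R) ^ (2 * j - 1) - 1) := by
      rw [show 2 * (m + 1) = 2 * m + 2 by ring, hrec, ih.1, ih.2, hprod m]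
      ring
    refine ⟨heven, ?_⟩
    rw [show 2 * (m + 1) + 1 = (2 * m + 1) + 2 by ring, hrec,
      show 2 * m + 1 + 1 = 2 * (m + 1) by ring, heven, ih.2, hprod (m + 1), hprod m]
    ring

end Counting

theorem Fq.card {s : ℕ} (hs : 0 < s) : Fintype.card (Fq s) = 3 ^ s := by
  rw [← Nat.card_eq_fintype_card, GaloisField.card 3 s hs.ne']

theorem Fq.two_ne_zero (s : ℕ) : (2 : Fq s) ≠ 0 := fun h => by
  have := (CharP.cast_eq_zero_iff (Fq s) 3 2).mp (by exact_mod_cast h)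
  norm_num at this

theorem bSum_eq_card_mul {s : ℕ} (hs : 0 < s) {ε : Fq s} (hε : ¬ IsSquare ε)
    {ψ : AddChar (Fq s) ℂ} (hψ : ψ ≠ 1) (r : ℕ) :
    bSum s ε r ψ = #(nonsingularSymm (Fq s) (Fin r)) * (-(3 : ℂ) ^ s) ^ r := by
  calc bSum s ε r ψ = ∑ B ∈ nonsingularSymm (Fq s) (Fin r), (-(Fintype.card (Fq s) : ℂ)) ^ r := by
        refine sum_congr rfl fun B hB => ?_
        rw [mem_nonsingularSymm] at hB
        rw [deltaEps, sum_trace_eq_sum_hermitianForm,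
          sum_addChar_hermitianForm hψ (Fq.two_ne_zero s) hε hB.2 hB.1, Fintype.card_fin]
    _ = _ := by rw [sum_const, nsmul_eq_mul, Fq.card hs]; push_cast; ring

theorem stmt7_general (s : ℕ) (hs : 0 < s) (ε : Fq s) (hε : ¬ IsSquare ε)
    (ψ : AddChar (Fq s) ℂ) (hψ : ψ ≠ 1) (r : ℕ) :
    bSum s ε r ψ =
      if Even r then
        ((3 : ℂ) ^ s) ^ (r * (r + 6) / 4) * ∏ j ∈ Finset.Icc 1 (r / 2), (((3 : ℂ) ^ s) ^ (2 * j - 1) - 1)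
      else
        -((3 : ℂ) ^ s) ^ ((r ^ 2 + 4 * r - 1) / 4) *
          ∏ j ∈ Finset.Icc 1 ((r + 1) / 2), (((3 : ℂ) ^ s) ^ (2 * j - 1) - 1) := by
  have hq : (Fintype.card (Fq s) : ℂ) = 3 ^ s := by rw [Fq.card hs]; push_cast; ring
  rw [bSum_eq_card_mul hs hε hψ]
  obtain ⟨m, rfl | rfl⟩ := Nat.even_or_odd' r
  · rw [if_pos (even_two_mul m), (card_nonsingularSymm_fin ℂ m).1, hq, (even_two_mul m).neg_pow,
      show 2 * m * (2 * m + 6) / 4 = m * (m + 1) + 2 * m by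
        rw [Nat.div_eq_of_eq_mul_left (by norm_num)]; ring,
      show 2 * m / 2 = m by omega, pow_add]
    ring
  · rw [if_neg (Nat.not_even_iff_odd.mpr (odd_two_mul_add_one m)),
      (card_nonsingularSymm_fin ℂ m).2, hq, (odd_two_mul_add_one m).neg_pow,
      show ((2 * m + 1) ^ 2 + 4 * (2 * m + 1) - 1) / 4 = m * (m + 1) + (2 * m + 1) by
        rw [Nat.div_eq_of_eq_mul_left (by norm_num)]; ring_nf; omega,
      show (2 * m + 1 + 1) / 2 = m + 1 by omega, pow_add]
    ring

theorem stmt7 (s : ℕ) (hs : 0 < s) (ε : Fq s) (hε : ¬ IsSquare ε)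
    (ψ : AddChar (Fq s) ℂ) (hψ : ψ ≠ 1) (r : ℕ) (hr : 1 ≤ r) :
    bSum s ε r ψ =
      if Even r then
        ((3 : ℂ) ^ s) ^ (r * (r + 6) / 4) * ∏ j ∈ Finset.Icc 1 (r / 2), (((3 : ℂ) ^ s) ^ (2 * j - 1) - 1)
      else
        -((3 : ℂ) ^ s) ^ ((r ^ 2 + 4 * r - 1) / 4) *
          ∏ j ∈ Finset.Icc 1 ((r + 1) / 2), (((3 : ℂ) ^ s) ^ (2 * j - 1) - 1) :=
  stmt7_general s hs ε hε ψ hψ r
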